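/- arXiv:0909.4117 — 2 statements merged into one kernel-verified Lean document; each statement's English description precedes it below -/
import Mathlib

section
/- Let H be a connected graded commutative Hopf algebra, A a commutative algebra decomposed as A = A₋ ⊕ A₊ with A₋, A₊ subalgebras (A₊ unital), and let π : A → A₋ be the projection, which is an idempotent Rota-Baxter operator of weight −1. Then every algebra homomorphism γ : H → A admits a unique Birkhoff decomposition γ = γ₋^{⋆−1} ⋆ γ₊ where γ₋ and γ₊ are algebra homomorphisms, γ₋(ker ε) ⊆ A₋, γ₊(H) ⊆ A₊, and γ₋(1) = 1. -/
open TensorProduct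

variable {k H A : Type*} [Field k] [CommRing H] [HopfAlgebra k H]
  [CommRing A] [Algebra k A]

/-- The convolution product `α ⋆ β = m_A ∘ (α ⊗ β) ∘ Δ` on linear maps `H → A`. -/
noncomputable def conv (α β : H →ₗ[k] A) : H →ₗ[k] A :=
  LinearMap.mul' k A ∘ₗ TensorProduct.map α β ∘ₗ Coalgebra.comul

/-!
Write `e = η ∘ ε` for the unit of the convolution ring of linear maps `H → A` and `π` for the
projection onto `A₋` along `A₊`. If `x` has degree `n`, then `Δx - x ⊗ 1` only has left tensor
factors of degree `< n`, so on degree `n` the map `α ⋆ (γ - e)` only depends on `α` below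
degree `n`. Hence Bogoliubov's recursion `γ₋ = e - π (γ₋ ⋆ (γ - e))` has exactly one solution.
For it, `γ₋ - e` takes values in `A₋` and `γ₊ := γ₋ ⋆ γ = e + (1 - π) (γ₋ ⋆ (γ - e))` takes
values in `A₊`. Conversely, `γ₋ ∘ S` is the convolution inverse of a character `γ₋`, so every
Birkhoff decomposition has `γ₊ = γ₋ ⋆ γ`, and then `γ₋` solves the recursion; this gives
uniqueness.

`γ₋` is multiplicative by induction on total degree. The defect `γ₋ (x y) - γ₋ x * γ₋ y` lies in
`A₋` because `γ₋ - e` does. Up to defects in lower total degree, it equals the defect of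
`γ₊ = γ₋ ⋆ γ`, which lies in `A₊`. So it vanishes; this is where the Rota–Baxter property of
`π`, i.e. that `A₋` and `A₊` are subalgebras, enters.
-/

open WithConv

theorem LinearMap.eq_zero_of_mem_span₂ {R M N P : Type*} [CommSemiring R] [AddCommMonoid M]
    [AddCommMonoid N] [AddCommMonoid P] [Module R M] [Module R N] [Module R P]
    (B : M →ₗ[R] N →ₗ[R] P) {s : Set M} {t : Set N} (h : ∀ a ∈ s, ∀ b ∈ t, B a b = 0)
    {a : M} {b : N} (ha : a ∈ Submodule.span R s) (hb : b ∈ Submodule.span R t) : B a b = 0 := by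
  have hspan := Submodule.apply_mem_map₂ B ha hb
  rwa [Submodule.map₂_span_span, Submodule.span_eq_bot.2, Submodule.mem_bot] at hspan
  rintro _ ⟨a, ha, b, hb, rfl⟩
  exact h a ha b hb

section LeftDegree

variable {R M : Type*} [CommSemiring R] [AddCommMonoid M] [Module R M]
  (𝒜 : ℕ → Submodule R M) (N : Type*) [AddCommMonoid N] [Module R N]

def leftDegreeLT (n : ℕ) : Submodule R (M ⊗[R] N) :=
  Submodule.span R {t | ∃ p < n, ∃ a ∈ 𝒜 p, ∃ b : N, a ⊗ₜ b = t}

variable {𝒜 N}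

theorem tmul_mem_leftDegreeLT {p n : ℕ} (hpn : p < n) {a : M} (ha : a ∈ 𝒜 p) (b : N) :
    a ⊗ₜ b ∈ leftDegreeLT 𝒜 N n :=
  Submodule.subset_span ⟨p, hpn, a, ha, b, rfl⟩

theorem leftDegreeLT_mono : Monotone (leftDegreeLT 𝒜 N) := fun _ _ hmn =>
  Submodule.span_mono fun _ ⟨p, hp, a, ha, b, hab⟩ => ⟨p, hp.trans_le hmn, a, ha, b, hab⟩

end LeftDegree

section Connected

variable {R C : Type*} [CommRing R] [Ring C] [Bialgebra R C] {𝒜 : ℕ → Submodule R C}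

theorem biSup_range_map_subtype_le (hconn : 𝒜 0 = Submodule.span R {(1 : C)}) (n : ℕ) :
    ⨆ p ∈ Finset.range (n + 1), LinearMap.range (map (𝒜 p).subtype (𝒜 (n - p)).subtype) ≤
      leftDegreeLT 𝒜 C n ⊔ (𝒜 n).map ((TensorProduct.mk R C C).flip 1) := by
  refine iSup₂_le fun p hp => ?_
  rw [range_map_eq_span_tmul, Submodule.span_le]
  rintro _ ⟨a, b, rfl⟩
  obtain hpn | rfl := (Nat.lt_succ_iff.1 (Finset.mem_range.1 hp)).lt_or_eq
  · exact Submodule.mem_sup_left (tmul_mem_leftDegreeLT hpn a.2 _)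
  · have hb : (b : C) ∈ Submodule.span R {(1 : C)} := by simpa [hconn] using b.2
    obtain ⟨c, hc⟩ := Submodule.mem_span_singleton.1 hb
    refine Submodule.mem_sup_right ⟨c • (a : C), Submodule.smul_mem _ c a.2, ?_⟩
    simp [← hc]

theorem rid_lTensor_counit_mem_biSup {n : ℕ} {t : C ⊗[R] C} (ht : t ∈ leftDegreeLT 𝒜 C n) :
    TensorProduct.rid R C (Coalgebra.counit.lTensor C t) ∈ ⨆ p ∈ Set.Iio n, 𝒜 p := by
  suffices leftDegreeLT 𝒜 C n ≤ (⨆ p ∈ Set.Iio n, 𝒜 p).comap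
      ((TensorProduct.rid R C).toLinearMap ∘ₗ Coalgebra.counit.lTensor C) from this ht
  refine Submodule.span_le.2 ?_
  rintro _ ⟨p, hp, a, ha, b, rfl⟩
  simpa using Submodule.smul_mem _ _ ((le_iSup₂ (f := fun p (_ : p ∈ Set.Iio n) => 𝒜 p) p hp) ha)

/- By connectedness the bidegree `(n, 0)` part of `Δx` is some `a ⊗ 1`, and applying
`id ⊗ ε` shows `x - a` lies both in degree `n` and in degrees `< n`. -/
theorem comul_sub_tmul_one_mem_leftDegreeLT [DirectSum.Decomposition 𝒜]
    (hconn : 𝒜 0 = Submodule.span R {(1 : C)})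
    (hcomul : ∀ n : ℕ, ∀ x ∈ 𝒜 n, Coalgebra.comul (R := R) x ∈
      ⨆ p ∈ Finset.range (n + 1),
        LinearMap.range (TensorProduct.map (𝒜 p).subtype (𝒜 (n - p)).subtype))
    {n : ℕ} {x : C} (hx : x ∈ 𝒜 n) :
    Coalgebra.comul (R := R) x - x ⊗ₜ[R] 1 ∈ leftDegreeLT 𝒜 C n := by
  obtain ⟨r, hr, _, ⟨a, ha, rfl⟩, hra⟩ :=
    Submodule.mem_sup.1 (biSup_range_map_subtype_le hconn n (hcomul n x hx))
  have hxa : x - a ∈ 𝒜 n ⊓ ⨆ p ∈ Set.Iio n, 𝒜 p := by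
    have hcounit := congrArg (fun t => TensorProduct.rid R C (Coalgebra.counit.lTensor C t)) hra
    simp only [LinearMap.flip_apply, mk_apply, map_add, LinearMap.lTensor_tmul,
      Bialgebra.counit_one, rid_tmul, one_smul, Coalgebra.lTensor_counit_comul] at hcounit
    refine ⟨sub_mem hx ha, ?_⟩
    rw [← hcounit, add_sub_cancel_right]
    exact rid_lTensor_counit_mem_biSup hr
  rw [((DirectSum.Decomposition.isInternal 𝒜).submodule_iSupIndep.disjoint_biSup
    (y := Set.Iio n) (lt_irrefl n)).eq_bot, Submodule.mem_bot, sub_eq_zero] at hxa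
  subst hxa
  simpa [← hra] using hr

end Connected

section FixedPoint

variable {R V M ι : Type*} [CommSemiring R] [AddCommMonoid V] [Module R V]
  [AddCommMonoid M] [Module R M]

theorem exists_linearMap_eq_on_graded [DecidableEq ι] (𝒜 : ι → Submodule R V)
    [DirectSum.Decomposition 𝒜] (f : ι → V →ₗ[R] M) :
    ∃ g : V →ₗ[R] M, ∀ i, ∀ x ∈ 𝒜 i, g x = f i x := by
  refine ⟨DirectSum.toModule R ι M (fun i => f i ∘ₗ (𝒜 i).subtype) ∘ₗ
    (DirectSum.decomposeLinearEquiv 𝒜).toLinearMap, fun i x hx => ?_⟩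
  lift x to 𝒜 i using hx
  simp

variable (𝒜 : ℕ → Submodule R V) [DirectSum.Decomposition 𝒜]

theorem existsUnique_fixedPoint_of_eqOn_degreeLT (T : (V →ₗ[R] M) → (V →ₗ[R] M))
    (hT : ∀ n f g, (∀ p < n, ∀ x ∈ 𝒜 p, f x = g x) → ∀ x ∈ 𝒜 n, T f x = T g x) :
    ∃! f, T f = f := by
  have hstable : ∀ n i, ∀ p < n, ∀ x ∈ 𝒜 p, T^[n + i] 0 x = T^[n] 0 x := by
    intro n
    induction n with
    | zero => intro i p hp; omega
    | succ n ih =>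
      intro i p hp x hx
      rw [show n + 1 + i = n + i + 1 by omega, Function.iterate_succ_apply',
        Function.iterate_succ_apply']
      exact hT p _ _ (fun q hq => ih i q (by omega)) x hx
  have hext : ∀ f g : V →ₗ[R] M, (∀ n, ∀ x ∈ 𝒜 n, f x = g x) → f = g := fun f g h =>
    DirectSum.decompose_lhom_ext 𝒜 fun n => LinearMap.ext fun x => h n x x.2
  obtain ⟨g, hg⟩ := exists_linearMap_eq_on_graded 𝒜 fun n => T^[n + 1] 0
  have hg_fix : T g = g := hext _ _ fun n x hx => by
    have hbelow : ∀ p < n, ∀ y ∈ 𝒜 p, g y = T^[n] 0 y := fun p hp y hy => by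
      rw [hg p y hy, ← hstable (p + 1) (n - (p + 1)) p (by omega) y hy,
        Nat.add_sub_cancel' (by omega)]
    rw [hT n _ _ hbelow x hx, hg n x hx, Function.iterate_succ_apply']
  refine ⟨g, hg_fix, fun f hf => hext _ _ fun n => ?_⟩
  induction n using Nat.strong_induction_on with
  | _ n ih => intro x hx; rw [← hf, ← hg_fix, hT n _ _ ih x hx]

end FixedPoint

section Convolution

variable {R C B : Type*} [CommRing R] [Ring C] [Bialgebra R C] [CommRing B] [Algebra R B]

theorem AlgHom.toConv_sub_one_apply_one (γ : C →ₐ[R] B) :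
    (toConv γ.toLinearMap - 1 : WithConv (C →ₗ[R] B)) 1 = 0 := by
  simp

theorem convMul_apply_eq_of_eqOn_degreeLT {𝒜 : ℕ → Submodule R C}
    (hΔ : ∀ n, ∀ x ∈ 𝒜 n, Coalgebra.comul (R := R) x - x ⊗ₜ[R] 1 ∈ leftDegreeLT 𝒜 C n)
    {f f' g : WithConv (C →ₗ[R] B)} (hg : g 1 = 0) {n : ℕ}
    (hff' : ∀ p < n, ∀ x ∈ 𝒜 p, f x = f' x) {x : C} (hx : x ∈ 𝒜 n) :
    (f * g) x = (f' * g) x := by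
  have hlower : Set.EqOn (LinearMap.mul' R B ∘ₗ map f.ofConv g.ofConv)
      (LinearMap.mul' R B ∘ₗ map f'.ofConv g.ofConv) (leftDegreeLT 𝒜 C n) := by
    refine LinearMap.eqOn_span' ?_
    rintro _ ⟨p, hp, a, ha, b, rfl⟩
    simp [hff' p hp a ha]
  rw [LinearMap.convMul_apply, LinearMap.convMul_apply,
    ← sub_add_cancel (Coalgebra.comul (R := R) x) (x ⊗ₜ[R] 1)]
  simpa [hg] using hlower (hΔ n x hx)

end Convolution

section Antipode

variable {R C B : Type*} [CommSemiring R] [Semiring C] [HopfAlgebra R C] [Semiring B]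
  [Algebra R B]

theorem AlgHom.toConv_comp_antipode_mul (f : C →ₐ[R] B) :
    toConv (f.toLinearMap ∘ₗ HopfAlgebra.antipode R) * toConv f.toLinearMap = 1 := by
  have h := LinearMap.algHom_comp_convMul_distrib f (toConv (HopfAlgebra.antipode R))
    (toConv LinearMap.id)
  rw [LinearMap.antipode_mul_id, LinearMap.comp_id] at h
  ext x
  simpa using congr($h.symm x)

theorem AlgHom.toConv_mul_comp_antipode (f : C →ₐ[R] B) :
    toConv f.toLinearMap * toConv (f.toLinearMap ∘ₗ HopfAlgebra.antipode R) = 1 := by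
  have h := LinearMap.algHom_comp_convMul_distrib f (toConv LinearMap.id)
    (toConv (HopfAlgebra.antipode R))
  rw [LinearMap.id_mul_antipode, LinearMap.comp_id] at h
  ext x
  simpa using congr($h.symm x)

end Antipode

section Bogoliubov

variable {R C B : Type*} [CommRing R] [Ring C] [Bialgebra R C] [CommRing B] [Algebra R B]
  {Bneg : NonUnitalSubalgebra R B} {Bpos : Subalgebra R B}
  (hcompl : IsCompl Bneg.toSubmodule (Subalgebra.toSubmodule Bpos)) (γ : C →ₐ[R] B)

-- On `ker ε` this is the recursion `γ₋ x = -π (γ x + ∑ γ₋ x' * γ x'')` of the paper.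
noncomputable def bogoliubov (α : WithConv (C →ₗ[R] B)) : WithConv (C →ₗ[R] B) :=
  1 - toConv (Bneg.toSubmodule.projection _ hcompl ∘ₗ (α * (toConv γ.toLinearMap - 1)).ofConv)

theorem bogoliubov_apply (α : WithConv (C →ₗ[R] B)) (x : C) :
    bogoliubov hcompl γ α x = algebraMap R B (Coalgebra.counit x) -
      Bneg.toSubmodule.projection _ hcompl ((α * (toConv γ.toLinearMap - 1)) x) := rfl

theorem bogoliubov_apply_eq_of_eqOn_degreeLT {𝒜 : ℕ → Submodule R C}
    (hΔ : ∀ n, ∀ x ∈ 𝒜 n, Coalgebra.comul (R := R) x - x ⊗ₜ[R] 1 ∈ leftDegreeLT 𝒜 C n)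
    {α α' : WithConv (C →ₗ[R] B)} {n : ℕ}
    (h : ∀ p < n, ∀ x ∈ 𝒜 p, α x = α' x) {x : C} (hx : x ∈ 𝒜 n) :
    bogoliubov hcompl γ α x = bogoliubov hcompl γ α' x := by
  rw [bogoliubov_apply, bogoliubov_apply,
    convMul_apply_eq_of_eqOn_degreeLT hΔ γ.toConv_sub_one_apply_one h hx]

theorem existsUnique_bogoliubov_eq_self (𝒜 : ℕ → Submodule R C) [DirectSum.Decomposition 𝒜]
    (hΔ : ∀ n, ∀ x ∈ 𝒜 n, Coalgebra.comul (R := R) x - x ⊗ₜ[R] 1 ∈ leftDegreeLT 𝒜 C n) :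
    ∃! α, bogoliubov hcompl γ α = α := by
  obtain ⟨f, hf, hf_unique⟩ := existsUnique_fixedPoint_of_eqOn_degreeLT 𝒜
    (fun f => (bogoliubov hcompl γ (toConv f)).ofConv)
    (fun _ _ _ h _ hx => bogoliubov_apply_eq_of_eqOn_degreeLT hcompl γ hΔ h hx)
  exact ⟨toConv f, congrArg toConv hf,
    fun α hα => congrArg toConv (hf_unique α.ofConv (congrArg ofConv hα))⟩

theorem bogoliubov_eq_self_of_mem {α : WithConv (C →ₗ[R] B)} (h1 : α 1 = 1)
    (hneg : ∀ x ∈ LinearMap.ker (Coalgebra.counit (R := R) (A := C)), α x ∈ Bneg)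
    (hpos : ∀ x, (α * toConv γ.toLinearMap) x ∈ Bpos) :
    bogoliubov hcompl γ α = α := by
  ext x
  have hsub : α x - algebraMap R B (Coalgebra.counit x) ∈ Bneg := by
    have hker : x - Coalgebra.counit (R := R) x • 1 ∈
        LinearMap.ker (Coalgebra.counit (R := R) (A := C)) := by
      simp [Bialgebra.counit_one]
    simpa [h1, Algebra.algebraMap_eq_smul_one] using hneg _ hker
  have hπ : Bneg.toSubmodule.projection _ hcompl (α x) =
      α x - algebraMap R B (Coalgebra.counit x) := by
    rw [← sub_add_cancel (α x) (algebraMap R B _), map_add,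
      Submodule.projection_apply_of_mem_left hcompl hsub,
      Submodule.projection_apply_of_mem_right hcompl (Bpos.algebraMap_mem _), add_zero,
      add_sub_cancel_right]
  have hΨ : (α * (toConv γ.toLinearMap - 1)) x = (α * toConv γ.toLinearMap) x - α x := by
    simp only [mul_sub, mul_one]
    rfl
  rw [bogoliubov_apply, hΨ, map_sub, Submodule.projection_apply_of_mem_right hcompl (hpos x), hπ]
  abel

variable {α : WithConv (C →ₗ[R] B)} (hα : bogoliubov hcompl γ α = α)
include hα

theorem sub_algebraMap_counit_mem_of_bogoliubov_eq_self (x : C) :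
    α x - algebraMap R B (Coalgebra.counit x) ∈ Bneg := by
  rw [← hα, bogoliubov_apply, sub_sub_cancel_left]
  exact neg_mem (Submodule.projection_apply_mem hcompl _)

theorem convMul_mem_of_bogoliubov_eq_self (x : C) : (α * toConv γ.toLinearMap) x ∈ Bpos := by
  set Ψ := α * (toConv γ.toLinearMap - 1)
  have hαx : α x = algebraMap R B (Coalgebra.counit x) -
      Bneg.toSubmodule.projection _ hcompl (Ψ x) := by
    rw [← bogoliubov_apply, hα]
  have hsplit : (α * toConv γ.toLinearMap) x = algebraMap R B (Coalgebra.counit x) +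
      (Ψ x - Bneg.toSubmodule.projection _ hcompl (Ψ x)) := by
    rw [show α * toConv γ.toLinearMap = Ψ + α by simp only [Ψ, mul_sub, mul_one, sub_add_cancel]]
    change Ψ x + α x = _
    rw [hαx]
    abel
  rw [hsplit]
  exact add_mem (Bpos.algebraMap_mem _) (Submodule.sub_projection_mem hcompl _)

theorem map_one_of_bogoliubov_eq_self : α 1 = 1 := by
  rw [← hα, bogoliubov_apply]
  simp [Bialgebra.comul_one, Algebra.TensorProduct.one_def]

end Bogoliubov

section MulDefect

variable {R S B : Type*} [CommSemiring R] [Semiring S] [Algebra R S] [Ring B] [Algebra R B]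

noncomputable def mulDefect (f : S →ₗ[R] B) : S →ₗ[R] S →ₗ[R] B :=
  (LinearMap.mul R S).compr₂ f - (LinearMap.mul R B).compl₁₂ f f

theorem mulDefect_apply (f : S →ₗ[R] B) (x y : S) :
    mulDefect f x y = f (x * y) - f x * f y := rfl

end MulDefect

section Multiplicativity

variable {R C B : Type*} [CommRing R] [Ring C] [Bialgebra R C] [CommRing B] [Algebra R B]

theorem mulDefect_mul'_map_tmul (f : C →ₗ[R] B) (γ : C →ₐ[R] B) (a b c d : C) :
    mulDefect (LinearMap.mul' R B ∘ₗ map f γ.toLinearMap) (a ⊗ₜ b) (c ⊗ₜ d) =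
      mulDefect f a c * (γ b * γ d) := by
  simp only [mulDefect_apply, Algebra.TensorProduct.tmul_mul_tmul, LinearMap.comp_apply,
    map_tmul, LinearMap.mul'_apply, AlgHom.toLinearMap_apply, map_mul]
  ring

theorem mulDefect_mul'_map_comul (f : C →ₗ[R] B) (γ : C →ₐ[R] B) (x y : C) :
    mulDefect (LinearMap.mul' R B ∘ₗ map f γ.toLinearMap) (Coalgebra.comul x)
      (Coalgebra.comul y) = mulDefect (toConv f * toConv γ.toLinearMap).ofConv x y := by
  simp only [mulDefect_apply, ← Bialgebra.comul_mul]
  rfl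

theorem mulDefect_mem_of_sub_algebraMap_counit_mem (S : NonUnitalSubalgebra R B)
    {f : C →ₗ[R] B} (h : ∀ x, f x - algebraMap R B (Coalgebra.counit x) ∈ S) (x y : C) :
    mulDefect f x y ∈ S := by
  have key : mulDefect f x y = (f (x * y) - algebraMap R B (Coalgebra.counit (x * y))) -
      ((f x - algebraMap R B (Coalgebra.counit x)) * (f y - algebraMap R B (Coalgebra.counit y)) +
        Coalgebra.counit (R := R) x • (f y - algebraMap R B (Coalgebra.counit y)) +
        Coalgebra.counit (R := R) y • (f x - algebraMap R B (Coalgebra.counit x))) := by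
    simp only [mulDefect_apply, Bialgebra.counit_mul, map_mul, Algebra.smul_def]
    ring
  rw [key]
  exact sub_mem (h _) (add_mem (add_mem (mul_mem (h x) (h y)) (S.smul_mem _ (h y)))
    (S.smul_mem _ (h x)))

variable {Bneg : NonUnitalSubalgebra R B} {Bpos : Subalgebra R B} (γ : C →ₐ[R] B)
  {𝒜 : ℕ → Submodule R C}
  (hΔ : ∀ n, ∀ x ∈ 𝒜 n, Coalgebra.comul (R := R) x - x ⊗ₜ[R] 1 ∈ leftDegreeLT 𝒜 C n)
  {α : WithConv (C →ₗ[R] B)} (hpos : ∀ x, (α * toConv γ.toLinearMap) x ∈ Bpos)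
include hΔ hpos

theorem mulDefect_mem_of_mulDefect_eq_zero_of_lt {p q : ℕ}
    (ih : ∀ p' q', p' + q' < p + q → ∀ x ∈ 𝒜 p', ∀ y ∈ 𝒜 q', mulDefect α.ofConv x y = 0)
    {x y : C} (hx : x ∈ 𝒜 p) (hy : y ∈ 𝒜 q) : mulDefect α.ofConv x y ∈ Bpos := by
  set F := LinearMap.mul' R B ∘ₗ map α.ofConv γ.toLinearMap
  have hlower : ∀ i j, i + j ≤ p + q + 1 → ∀ s ∈ leftDegreeLT 𝒜 C i,
      ∀ t ∈ leftDegreeLT 𝒜 C j, mulDefect F s t = 0 := by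
    intro i j hij s hs t ht
    refine LinearMap.eq_zero_of_mem_span₂ _ ?_ hs ht
    rintro _ ⟨p', hp', a, ha, b, rfl⟩ _ ⟨q', hq', c, hc, d, rfl⟩
    rw [mulDefect_mul'_map_tmul, ih p' q' (by omega) a ha c hc, zero_mul]
  have hx1 : x ⊗ₜ[R] (1 : C) ∈ leftDegreeLT 𝒜 C (p + 1) :=
    tmul_mem_leftDegreeLT (Nat.lt_succ_self p) hx 1
  have hΔy : Coalgebra.comul (R := R) y ∈ leftDegreeLT 𝒜 C (q + 1) := by
    simpa using add_mem (leftDegreeLT_mono (Nat.le_succ q) (hΔ q y hy))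
      (tmul_mem_leftDegreeLT (Nat.lt_succ_self q) hy (1 : C))
  -- Of the terms of `Δx * Δy`, only `(x ⊗ 1) * (y ⊗ 1)` has left factors of total degree `p + q`.
  have hdefect : mulDefect α.ofConv x y = mulDefect (α * toConv γ.toLinearMap).ofConv x y :=
    calc mulDefect α.ofConv x y
        = mulDefect F (x ⊗ₜ 1) (y ⊗ₜ 1) := by simp [F, mulDefect_mul'_map_tmul]
      _ = mulDefect F (Coalgebra.comul x) (Coalgebra.comul y)
            - mulDefect F (Coalgebra.comul x - x ⊗ₜ 1) (Coalgebra.comul y)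
            - mulDefect F (x ⊗ₜ 1) (Coalgebra.comul y - y ⊗ₜ 1) := by
          simp only [map_sub, LinearMap.sub_apply]
          abel
      _ = mulDefect (α * toConv γ.toLinearMap).ofConv x y := by
          rw [hlower p (q + 1) (by omega) _ (hΔ p x hx) _ hΔy,
            hlower (p + 1) q (by omega) _ hx1 _ (hΔ q y hy), sub_zero, sub_zero,
            mulDefect_mul'_map_comul]
  rw [hdefect, mulDefect_apply]
  exact sub_mem (hpos _) (mul_mem (hpos x) (hpos y))

theorem map_mul_of_convMul_mem [DirectSum.Decomposition 𝒜]
    (hneg : ∀ x, α x - algebraMap R B (Coalgebra.counit x) ∈ Bneg)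
    (hdisj : Disjoint Bneg.toSubmodule (Subalgebra.toSubmodule Bpos)) (x y : C) :
    α (x * y) = α x * α y := by
  have hhom : ∀ n p q, p + q = n → ∀ x ∈ 𝒜 p, ∀ y ∈ 𝒜 q, mulDefect α.ofConv x y = 0 := by
    intro n
    induction n using Nat.strong_induction_on with
    | _ n ih =>
      rintro p q rfl x hx y hy
      exact Submodule.disjoint_def.1 hdisj _
        (mulDefect_mem_of_sub_algebraMap_counit_mem Bneg hneg x y)
        (mulDefect_mem_of_mulDefect_eq_zero_of_lt γ hΔ hpos
          (fun p' q' h => ih _ h p' q' rfl) hx hy)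
  have hspan : ∀ z : C, z ∈ Submodule.span R (⋃ p, (𝒜 p : Set C)) := fun z => by
    rw [← Submodule.iSup_eq_span, (DirectSum.Decomposition.isInternal 𝒜).submodule_iSup_eq_top]
    trivial
  refine sub_eq_zero.1
    (LinearMap.eq_zero_of_mem_span₂ (mulDefect α.ofConv) ?_ (hspan x) (hspan y))
  simp only [Set.mem_iUnion, SetLike.mem_coe]
  rintro a ⟨p, ha⟩ b ⟨q, hb⟩
  exact hhom _ p q rfl a ha b hb

end Multiplicativity

theorem conv_eq_ofConv_mul (α β : H →ₗ[k] A) : conv α β = (toConv α * toConv β).ofConv := rfl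

theorem conv_comp_antipode_eq_iff (f g γ : H →ₐ[k] A) :
    conv (f.toLinearMap ∘ₗ HopfAlgebra.antipode k) g.toLinearMap = γ.toLinearMap ↔
      toConv g.toLinearMap = toConv f.toLinearMap * toConv γ.toLinearMap := by
  rw [conv_eq_ofConv_mul, ← toConv_injective.eq_iff, toConv_ofConv]
  constructor
  · intro h
    rw [← h, ← mul_assoc, f.toConv_mul_comp_antipode, one_mul]
  · intro h
    rw [h, ← mul_assoc, f.toConv_comp_antipode_mul, one_mul]

/-- Let `H` be a connected graded commutative Hopf algebra and `A` a
commutative algebra decomposed as `A = A₋ ⊕ A₊` with `A₋` a (non-unital) subalgebra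
and `A₊` a unital subalgebra.  Then every algebra homomorphism `γ : H → A` admits a
unique Birkhoff decomposition `γ = γ₋^{⋆−1} ⋆ γ₊ = (γ₋ ∘ S) ⋆ γ₊` with `γ₋, γ₊`
algebra homomorphisms, `γ₋(ker ε) ⊆ A₋`, `γ₊(H) ⊆ A₊` (and `γ₋(1) = 1`). -/
theorem birkhoff_decomposition
    (𝒜 : ℕ → Submodule k H) [GradedAlgebra 𝒜]
    (hconn : 𝒜 0 = Submodule.span k {(1 : H)})
    (hcomul : ∀ n : ℕ, ∀ x ∈ 𝒜 n, Coalgebra.comul (R := k) x ∈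
      ⨆ p ∈ Finset.range (n + 1),
        LinearMap.range (TensorProduct.map (𝒜 p).subtype (𝒜 (n - p)).subtype))
    (Aneg : NonUnitalSubalgebra k A) (Apos : Subalgebra k A)
    (hcompl : IsCompl Aneg.toSubmodule (Subalgebra.toSubmodule Apos))
    (γ : H →ₐ[k] A) :
    ∃! p : (H →ₐ[k] A) × (H →ₐ[k] A),
      (∀ x ∈ LinearMap.ker (Coalgebra.counit (R := k) (A := H)),
          p.1 x ∈ Aneg) ∧
      (∀ x : H, p.2 x ∈ Apos) ∧
      conv (p.1.toLinearMap ∘ₗ HopfAlgebra.antipode (R := k)) p.2.toLinearMap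
        = γ.toLinearMap := by
  have hΔ : ∀ n, ∀ x ∈ 𝒜 n, Coalgebra.comul (R := k) x - x ⊗ₜ[k] 1 ∈ leftDegreeLT 𝒜 H n :=
    fun n x hx => comul_sub_tmul_one_mem_leftDegreeLT hconn hcomul hx
  obtain ⟨α, hα, hα_unique⟩ := existsUnique_bogoliubov_eq_self hcompl γ 𝒜 hΔ
  have hneg := sub_algebraMap_counit_mem_of_bogoliubov_eq_self hcompl γ hα
  have hpos := convMul_mem_of_bogoliubov_eq_self hcompl γ hα
  let γneg : H →ₐ[k] A := AlgHom.ofLinearMap α.ofConv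
    (map_one_of_bogoliubov_eq_self hcompl γ hα)
    (map_mul_of_convMul_mem γ hΔ hpos hneg hcompl.disjoint)
  refine ⟨(γneg, (toConv γneg * toConv γ).ofConv),
    ⟨fun x hx => ?_, hpos, (conv_comp_antipode_eq_iff _ _ _).2 rfl⟩, ?_⟩
  · simpa [γneg, LinearMap.mem_ker.1 hx] using hneg x
  · rintro ⟨δ, δ'⟩ ⟨hδneg, hδpos, hδ⟩
    rw [conv_comp_antipode_eq_iff] at hδ
    obtain rfl : δ = γneg := AlgHom.toLinearMap_injective <| congrArg ofConv <|
      hα_unique _ (bogoliubov_eq_self_of_mem hcompl γ (map_one δ) hδneg (hδ ▸ hδpos))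
    congr
    exact AlgHom.toLinearMap_injective (congrArg ofConv hδ)
end

section
/- Let H be a graded connected Hopf algebra with grading operator Y, and S its antipode. Then S ⋆ Y (the convolution of the antipode with the grading operator), i.e., the map x ↦ m((S⊗Y)Δx), annihilates products: (S ⋆ Y)(xy) = 0 for all x, y in the augmentation ideal of H. -/
/-!
Since `H` is commutative, the antipode is multiplicative, and the grading operator `Y` is a
derivation. Expanding `Δ(ab) = Δa · Δb` then gives
`(S ⋆ Y)(ab) = (S ⋆ Y)(a) ε(b) + ε(a) (S ⋆ Y)(b)`, because `S ⋆ id = η ∘ ε`;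
both terms vanish when `a, b ∈ ker ε`.
-/

open Coalgebra WithConv

theorem GradedAlgebra.map_mul_of_eq_smul {ι k A : Type*} [DecidableEq ι] [AddMonoid ι]
    [CommSemiring k] [Semiring A] [Algebra k A] (𝒜 : ι → Submodule k A) [GradedAlgebra 𝒜]
    (w : ι →+ k) {Y : A →ₗ[k] A} (hY : ∀ i, ∀ x ∈ 𝒜 i, Y x = w i • x) (a b : A) :
    Y (a * b) = Y a * b + a * Y b := by
  induction a using DirectSum.Decomposition.inductionOn 𝒜 with
  | zero => simp
  | add a a' ha ha' => simp only [add_mul, map_add, ha, ha']; abel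
  | @homogeneous i a =>
    induction b using DirectSum.Decomposition.inductionOn 𝒜 with
    | zero => simp
    | add b b' hb hb' => simp only [mul_add, map_add, hb, hb']; abel
    | @homogeneous j b =>
      rw [hY _ _ (SetLike.mul_mem_graded a.2 b.2), hY i a a.2, hY j b b.2, map_add, add_smul,
        smul_mul_assoc, mul_smul_comm]

theorem LinearMap.convMul_apply_mul_of_leibniz {k C A : Type*} [CommSemiring k] [Semiring C]
    [Bialgebra k C] [CommSemiring A] [Algebra k A] {f φ D : C →ₗ[k] A}
    (hf : ∀ a b, f (a * b) = f a * f b) (hD : ∀ a b, D (a * b) = D a * φ b + φ a * D b)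
    (a b : C) :
    (toConv f * toConv D) (a * b) =
      (toConv f * toConv D) a * (toConv f * toConv φ) b +
        (toConv f * toConv φ) a * (toConv f * toConv D) b := by
  simp only [((ℛ k a).mul (ℛ k b)).convMul_apply, (ℛ k a).convMul_apply, (ℛ k b).convMul_apply,
    Repr.mul_index, Repr.mul_left, Repr.mul_right, Finset.sum_product, Finset.sum_mul_sum,
    ← Finset.sum_add_distrib, hf, hD]
  refine Finset.sum_congr rfl fun i _ => Finset.sum_congr rfl fun j _ => ?_
  ring

theorem HopfAlgebra.antipode_convMul_apply_mul {k H : Type*} [CommSemiring k] [CommSemiring H]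
    [HopfAlgebra k H] {D : H →ₗ[k] H} (hD : ∀ a b, D (a * b) = D a * b + a * D b) (a b : H) :
    (toConv (antipode k (A := H)) * toConv D) (a * b) =
      (toConv (antipode k (A := H)) * toConv D) a * algebraMap k H (counit b) +
        algebraMap k H (counit a) * (toConv (antipode k (A := H)) * toConv D) b := by
  have := LinearMap.convMul_apply_mul_of_leibniz (φ := LinearMap.id) antipode_mul_distrib hD a b
  rwa [LinearMap.antipode_mul_id, LinearMap.convOne_apply] at this

theorem dynkin_operator_annihilates_products_general
    {k H : Type*} [CommRing k] [CommRing H] [HopfAlgebra k H]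
    (𝒜 : ℕ → Submodule k H) [GradedAlgebra 𝒜]
    (Y : H →ₗ[k] H) (hY : ∀ n : ℕ, ∀ x ∈ 𝒜 n, Y x = (n : k) • x)
    (x y : H)
    (hx : x ∈ LinearMap.ker (Coalgebra.counit (R := k) (A := H)))
    (hy : y ∈ LinearMap.ker (Coalgebra.counit (R := k) (A := H))) :
    (LinearMap.mul' k H ∘ₗ
        TensorProduct.map (HopfAlgebra.antipode (R := k)) Y ∘ₗ
        Coalgebra.comul) (x * y) = 0 := by
  have hY_leibniz := GradedAlgebra.map_mul_of_eq_smul 𝒜 (Nat.castAddMonoidHom k) hY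
  change (toConv (HopfAlgebra.antipode k (A := H)) * toConv Y) (x * y) = 0
  rw [HopfAlgebra.antipode_convMul_apply_mul hY_leibniz, LinearMap.mem_ker.mp hx,
    LinearMap.mem_ker.mp hy]
  simp

/-- Let `H` be a graded connected Hopf algebra with grading operator
`Y` and antipode `S`, with coproduct respecting the grading.  Then the Dynkin
operator `S ⋆ Y = m ∘ (S ⊗ Y) ∘ Δ` annihilates products of elements of the
augmentation ideal: `(S ⋆ Y)(x y) = 0` for all `x, y ∈ ker ε`. -/
theorem dynkin_operator_annihilates_products
    {k H : Type*} [CommRing k] [CommRing H] [HopfAlgebra k H]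
    (𝒜 : ℕ → Submodule k H) [GradedAlgebra 𝒜]
    (hconn : 𝒜 0 = Submodule.span k {(1 : H)})
    (hcomul : ∀ n : ℕ, ∀ x ∈ 𝒜 n, Coalgebra.comul (R := k) x ∈
      ⨆ p ∈ Finset.range (n + 1),
        LinearMap.range (TensorProduct.map (𝒜 p).subtype (𝒜 (n - p)).subtype))
    (Y : H →ₗ[k] H) (hY : ∀ n : ℕ, ∀ x ∈ 𝒜 n, Y x = (n : k) • x)
    (x y : H)
    (hx : x ∈ LinearMap.ker (Coalgebra.counit (R := k) (A := H)))
    (hy : y ∈ LinearMap.ker (Coalgebra.counit (R := k) (A := H))) :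
    (LinearMap.mul' k H ∘ₗ
        TensorProduct.map (HopfAlgebra.antipode (R := k)) Y ∘ₗ
        Coalgebra.comul) (x * y) = 0 :=
  dynkin_operator_annihilates_products_general 𝒜 Y hY x y hx hy
end
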